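/- arXiv:2405.07381 — 2 statements merged into one kernel-verified Lean document; each statement's English description precedes it below -/
import Mathlib

section
/- For matrices $S_t$ defined backwards by the Riccati recursion $S_t = Q_t + A_t^T S_{t+1} A_t - A_t^T S_{t+1} B_t (B_t^T S_{t+1} B_t + R_t)^{-1} B_t^T S_{t+1} A_t$ with terminal condition $S_{N+1} = Q_{N+1}$, where $Q_t \succeq 0$ and $R_t \succ 0$, each $S_t$ is positive semi-definite. -/
/-!
The Riccati update `Q + AᴴSA - AᴴSB (BᴴSB + R)⁻¹ BᴴSA` is `Q` plus the Schur complement of the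
positive definite block `BᴴSB + R` in the block matrix
`[[AᴴSA, AᴴSB], [BᴴSA, BᴴSB + R]] = [A B]ᴴ S [A B] + [0 1]ᴴ R [0 1]`,
which is positive semidefinite as soon as `S` is. Schur complements of positive semidefinite
matrices are positive semidefinite, so backward induction from `S (N + 1) = Q (N + 1)` applies.
-/

open Matrix

namespace Matrix

variable {𝕜 ι κ : Type*} [Field 𝕜] [PartialOrder 𝕜] [StarRing 𝕜] [StarOrderedRing 𝕜]
  [Fintype ι] [Fintype κ] [DecidableEq κ]

noncomputable def riccatiMap (A : Matrix ι ι 𝕜) (B : Matrix ι κ 𝕜) (Q : Matrix ι ι 𝕜)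
    (R : Matrix κ κ 𝕜) (S : Matrix ι ι 𝕜) : Matrix ι ι 𝕜 :=
  Q + Aᴴ * S * A - Aᴴ * S * B * (Bᴴ * S * B + R)⁻¹ * Bᴴ * S * A

theorem PosSemidef.fromBlocks_riccati {S : Matrix ι ι 𝕜} {R : Matrix κ κ 𝕜}
    (hS : S.PosSemidef) (hR : R.PosSemidef) (A : Matrix ι ι 𝕜) (B : Matrix ι κ 𝕜) :
    (fromBlocks (Aᴴ * S * A) (Aᴴ * S * B) (Aᴴ * S * B)ᴴ (Bᴴ * S * B + R)).PosSemidef := by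
  have hgram : fromBlocks (Aᴴ * S * A) (Aᴴ * S * B) (Aᴴ * S * B)ᴴ (Bᴴ * S * B + R) =
      (fromCols A B)ᴴ * S * fromCols A B +
        (fromCols (0 : Matrix κ ι 𝕜) 1)ᴴ * R * fromCols (0 : Matrix κ ι 𝕜) 1 := by
    rw [conjTranspose_fromCols_eq_fromRows_conjTranspose,
      conjTranspose_fromCols_eq_fromRows_conjTranspose, fromRows_mul, fromRows_mul_fromCols,
      fromRows_mul, fromRows_mul_fromCols, fromBlocks_add]
    simp [conjTranspose_mul, hS.isHermitian.eq, Matrix.mul_assoc]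
  rw [hgram]
  exact (hS.conjTranspose_mul_mul_same _).add (hR.conjTranspose_mul_mul_same _)

theorem PosSemidef.riccatiMap {Q S : Matrix ι ι 𝕜} {R : Matrix κ κ 𝕜}
    (hQ : Q.PosSemidef) (hR : R.PosDef) (hS : S.PosSemidef)
    (A : Matrix ι ι 𝕜) (B : Matrix ι κ 𝕜) : (riccatiMap A B Q R S).PosSemidef := by
  have hM : (Bᴴ * S * B + R).PosDef := hR.posSemidef_add (hS.conjTranspose_mul_mul_same B)
  have := hM.isUnit.invertible
  have hschur := (PosDef.fromBlocks₂₂ _ _ hM).mp (hS.fromBlocks_riccati hR.posSemidef A B)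
  rw [conjTranspose_mul, conjTranspose_mul, conjTranspose_conjTranspose,
    hS.isHermitian.eq] at hschur
  convert hQ.add hschur using 1
  simp only [Matrix.riccatiMap, Matrix.mul_assoc, add_sub_assoc]

end Matrix

/-- Riccati recursion preserves positive semi-definiteness. -/
theorem riccati_posSemidef {n m : ℕ} (N : ℕ)
    (A : ℕ → Matrix (Fin n) (Fin n) ℝ) (B : ℕ → Matrix (Fin n) (Fin m) ℝ)
    (Q : ℕ → Matrix (Fin n) (Fin n) ℝ) (R : ℕ → Matrix (Fin m) (Fin m) ℝ)
    (hQ : ∀ t ≤ N + 1, (Q t).PosSemidef) (hR : ∀ t ≤ N, (R t).PosDef)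
    (S : ℕ → Matrix (Fin n) (Fin n) ℝ)
    (hSN : S (N + 1) = Q (N + 1))
    (hS : ∀ t ≤ N, S t = Q t + (A t)ᵀ * S (t + 1) * A t -
      (A t)ᵀ * S (t + 1) * B t * ((B t)ᵀ * S (t + 1) * B t + R t)⁻¹ *
        (B t)ᵀ * S (t + 1) * A t) :
    ∀ t ≤ N + 1, (S t).PosSemidef := by
  intro t ht
  induction ht using Nat.decreasingInduction with
  | self => exact hSN ▸ hQ (N + 1) le_rfl
  | of_succ t ht hnext =>
    have htN : t ≤ N := Nat.le_of_lt_succ ht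
    rw [hS t htN]
    simpa only [riccatiMap, conjTranspose_eq_transpose_of_trivial] using
      (hQ t ht.le).riccatiMap (hR t htN) hnext (A t) (B t)
end

section
/- The completion-of-squares identity for the LQR cost: for any sequences $x_k$, $a_k$ satisfying $x_{k+1} = A_k x_k + B_k a_k + w_k$ and $S_k$ satisfying the Riccati recursion with $S_{N+1} = Q_{N+1}$, the following holds: $\sum_{k=0}^{N+1} x_k^T Q_k x_k + \sum_{k=0}^N a_k^T R_k a_k = x_0^T S_0 x_0 + \sum_{k=0}^N (a_k + L_k x_k)^T \Lambda_k (a_k + L_k x_k) + \sum_{k=0}^N \big( w_k^T S_{k+1} w_k + 2 w_k^T S_{k+1} (A_k x_k + B_k a_k) \big)$, where $L_k = \Lambda_k^{-1} B_k^T S_{k+1} A_k$ and $\Lambda_k = B_k^T S_{k+1} B_k + R_k$. -/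
open Matrix

lemma dotL {p q : ℕ} (M : Matrix (Fin p) (Fin q) ℝ) (u : Fin q → ℝ) (v : Fin p → ℝ) :
    (M *ᵥ u) ⬝ᵥ v = u ⬝ᵥ (Mᵀ *ᵥ v) := by
  rw [dotProduct_comm, dotProduct_mulVec, dotProduct_comm, ← mulVec_transpose]

lemma dotC {p q : ℕ} (u : Fin p → ℝ) (M : Matrix (Fin p) (Fin q) ℝ) (v : Fin q → ℝ) :
    u ⬝ᵥ M *ᵥ v = v ⬝ᵥ Mᵀ *ᵥ u := by
  rw [← dotL, dotProduct_comm]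

lemma trsym {p : ℕ} {M : Matrix (Fin p) (Fin p) ℝ} (h : M.IsHermitian) : Mᵀ = M := by
  rw [← conjTranspose_eq_transpose_of_trivial]; exact h

lemma psd_conj {p q : ℕ} {M : Matrix (Fin p) (Fin p) ℝ} (h : M.PosSemidef)
    (B : Matrix (Fin p) (Fin q) ℝ) : (Bᵀ * M * B).PosSemidef := by
  simpa [conjTranspose_eq_transpose_of_trivial] using h.conjTranspose_mul_mul_same B

lemma step {n m : ℕ} (A : Matrix (Fin n) (Fin n) ℝ) (B : Matrix (Fin n) (Fin m) ℝ)
    (Q S0 S1 : Matrix (Fin n) (Fin n) ℝ) (R Λ G : Matrix (Fin m) (Fin m) ℝ)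
    (hS1 : S1ᵀ = S1) (hΛ : Λ = Bᵀ * S1 * B + R)
    (hG1 : Λ * G = 1) (hG2 : G * Λ = 1) (hGt : Gᵀ = G)
    (hS0 : S0 = Q + Aᵀ*S1*A - Aᵀ*S1*B*G*Bᵀ*S1*A)
    (x w : Fin n → ℝ) (a : Fin m → ℝ) :
    x ⬝ᵥ Q *ᵥ x + a ⬝ᵥ R *ᵥ a + (A*ᵥx + B*ᵥa + w) ⬝ᵥ S1 *ᵥ (A*ᵥx + B*ᵥa + w) - x ⬝ᵥ S0 *ᵥ x
    = (a + (G*Bᵀ*S1*A) *ᵥ x) ⬝ᵥ Λ *ᵥ (a + (G*Bᵀ*S1*A) *ᵥ x)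
      + (w ⬝ᵥ S1 *ᵥ w + 2 * (w ⬝ᵥ S1 *ᵥ (A*ᵥx + B*ᵥa))) := by
  have hc1 : ∀ (p : ℕ) (X : Matrix (Fin m) (Fin p) ℝ), Λ * (G * X) = X := by
    intro p X; rw [← Matrix.mul_assoc, hG1, Matrix.one_mul]
  have hc2 : ∀ (p : ℕ) (X : Matrix (Fin m) (Fin p) ℝ), G * (Λ * X) = X := by
    intro p X; rw [← Matrix.mul_assoc, hG2, Matrix.one_mul]
  have e1 : x ⬝ᵥ (Aᵀ * S1) *ᵥ w = w ⬝ᵥ (S1 * A) *ᵥ x := by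
    rw [dotC, transpose_mul, transpose_transpose, hS1]
  have e2 : a ⬝ᵥ (Bᵀ * S1) *ᵥ w = w ⬝ᵥ (S1 * B) *ᵥ a := by
    rw [dotC, transpose_mul, transpose_transpose, hS1]
  subst hS0
  simp only [mulVec_add, add_mulVec, sub_mulVec, dotProduct_add, add_dotProduct,
    dotProduct_sub, sub_dotProduct, dotL, mulVec_mulVec, transpose_mul, transpose_transpose,
    hS1, hGt, hG1, hG2, Matrix.mul_assoc, hc1, hc2, Matrix.mul_one, Matrix.one_mul]
  rw [e1, e2, hΛ]
  simp only [add_mulVec, dotProduct_add, Matrix.mul_assoc]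
  ring

lemma psd_step {n m : ℕ} (A : Matrix (Fin n) (Fin n) ℝ) (B : Matrix (Fin n) (Fin m) ℝ)
    (Q S0 S1 : Matrix (Fin n) (Fin n) ℝ) (R Λ : Matrix (Fin m) (Fin m) ℝ)
    (hQ : Q.PosSemidef) (hR : R.PosDef) (hS1 : S1.PosSemidef)
    (hΛ : Λ = Bᵀ * S1 * B + R)
    (hS0 : S0 = Q + Aᵀ*S1*A - Aᵀ*S1*B*Λ⁻¹*Bᵀ*S1*A) :
    S0.PosSemidef := by
  have hΛpd : Λ.PosDef := hΛ ▸ Matrix.PosDef.posSemidef_add (psd_conj hS1 B) hR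
  have hS1t : S1ᵀ = S1 := trsym hS1.isHermitian
  have hΛt : Λᵀ = Λ := trsym hΛpd.isHermitian
  have hdet : IsUnit Λ.det := (Matrix.isUnit_iff_isUnit_det Λ).1 hΛpd.isUnit
  have hG1 : Λ * Λ⁻¹ = 1 := Matrix.mul_nonsing_inv Λ hdet
  have hG2 : Λ⁻¹ * Λ = 1 := Matrix.nonsing_inv_mul Λ hdet
  have hGt : (Λ⁻¹)ᵀ = Λ⁻¹ := by rw [Matrix.transpose_nonsing_inv, hΛt]
  refine Matrix.PosSemidef.of_dotProduct_mulVec_nonneg ?_ ?_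
  · rw [Matrix.IsHermitian, conjTranspose_eq_transpose_of_trivial, hS0]
    simp only [transpose_add, transpose_sub, transpose_mul, transpose_transpose, hS1t, hGt,
      trsym hQ.isHermitian, Matrix.mul_assoc]
  · intro v
    have h := step A B Q S0 S1 R Λ Λ⁻¹ hS1t hΛ hG1 hG2 hGt hS0 v 0
      (-((Λ⁻¹*Bᵀ*S1*A) *ᵥ v))
    simp only [neg_add_cancel, zero_dotProduct, dotProduct_zero, mulVec_zero, add_zero,
      mul_zero, zero_add] at h
    have h1 : 0 ≤ v ⬝ᵥ Q *ᵥ v := by simpa using hQ.dotProduct_mulVec_nonneg v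
    have h2 : 0 ≤ (-((Λ⁻¹*Bᵀ*S1*A) *ᵥ v)) ⬝ᵥ R *ᵥ (-((Λ⁻¹*Bᵀ*S1*A) *ᵥ v)) := by
      simpa using hR.posSemidef.dotProduct_mulVec_nonneg (-((Λ⁻¹*Bᵀ*S1*A) *ᵥ v))
    have h3 : 0 ≤ (A *ᵥ v + B *ᵥ -((Λ⁻¹*Bᵀ*S1*A) *ᵥ v)) ⬝ᵥ
        S1 *ᵥ (A *ᵥ v + B *ᵥ -((Λ⁻¹*Bᵀ*S1*A) *ᵥ v)) := by
      simpa using hS1.dotProduct_mulVec_nonneg (A *ᵥ v + B *ᵥ -((Λ⁻¹*Bᵀ*S1*A) *ᵥ v))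
    simpa using by linarith [h, h1, h2, h3]

/-- Completion-of-squares identity for the LQR cost. -/
theorem lqr_completion_of_squares {n m : ℕ} (N : ℕ)
    (A : ℕ → Matrix (Fin n) (Fin n) ℝ) (B : ℕ → Matrix (Fin n) (Fin m) ℝ)
    (Q : ℕ → Matrix (Fin n) (Fin n) ℝ) (R : ℕ → Matrix (Fin m) (Fin m) ℝ)
    (hQ : ∀ k ≤ N + 1, (Q k).PosSemidef) (hR : ∀ k ≤ N, (R k).PosDef)
    (S : ℕ → Matrix (Fin n) (Fin n) ℝ)
    (Λ : ℕ → Matrix (Fin m) (Fin m) ℝ)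
    (L : ℕ → Matrix (Fin m) (Fin n) ℝ)
    (hΛ : ∀ k ≤ N, Λ k = (B k)ᵀ * S (k + 1) * B k + R k)
    (hL : ∀ k ≤ N, L k = (Λ k)⁻¹ * (B k)ᵀ * S (k + 1) * A k)
    (hSN : S (N + 1) = Q (N + 1))
    (hS : ∀ k ≤ N, S k = Q k + (A k)ᵀ * S (k + 1) * A k -
      (A k)ᵀ * S (k + 1) * B k * (Λ k)⁻¹ * (B k)ᵀ * S (k + 1) * A k)
    (x : ℕ → Fin n → ℝ) (a : ℕ → Fin m → ℝ) (w : ℕ → Fin n → ℝ)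
    (hx : ∀ k ≤ N, x (k + 1) = (A k).mulVec (x k) + (B k).mulVec (a k) + w k) :
    (∑ k ∈ Finset.range (N + 2), x k ⬝ᵥ (Q k).mulVec (x k)) +
      ∑ k ∈ Finset.range (N + 1), a k ⬝ᵥ (R k).mulVec (a k) =
    x 0 ⬝ᵥ (S 0).mulVec (x 0) +
      (∑ k ∈ Finset.range (N + 1),
        (a k + (L k).mulVec (x k)) ⬝ᵥ (Λ k).mulVec (a k + (L k).mulVec (x k))) +
      ∑ k ∈ Finset.range (N + 1),
        (w k ⬝ᵥ (S (k + 1)).mulVec (w k) +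
          2 * (w k ⬝ᵥ (S (k + 1)).mulVec ((A k).mulVec (x k) + (B k).mulVec (a k)))) := by
  -- positive semidefiniteness of S, by downward induction
  have hpsd : ∀ t : ℕ, ∀ j : ℕ, j + t = N + 1 → (S j).PosSemidef := by
    intro t
    induction t with
    | zero =>
      intro j hj
      have : j = N + 1 := by omega
      subst this
      exact hSN ▸ hQ (N + 1) le_rfl
    | succ t ih =>
      intro j hj
      have hjN : j ≤ N := by omega
      have hS1 : (S (j + 1)).PosSemidef := ih (j + 1) (by omega)
      exact psd_step (A j) (B j) (Q j) (S j) (S (j + 1)) (R j) (Λ j)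
        (hQ j (by omega)) (hR j hjN) hS1 (hΛ j hjN) (hS j hjN)
  -- per-step identity
  have hstep : ∀ k ≤ N,
      x k ⬝ᵥ (Q k) *ᵥ x k + a k ⬝ᵥ (R k) *ᵥ a k +
        (x (k+1) ⬝ᵥ (S (k+1)) *ᵥ x (k+1) - x k ⬝ᵥ (S k) *ᵥ x k)
      = (a k + (L k) *ᵥ x k) ⬝ᵥ (Λ k) *ᵥ (a k + (L k) *ᵥ x k)
        + (w k ⬝ᵥ (S (k+1)) *ᵥ w k +
          2 * (w k ⬝ᵥ (S (k+1)) *ᵥ ((A k) *ᵥ x k + (B k) *ᵥ a k))) := by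
    intro k hk
    have hS1 : (S (k + 1)).PosSemidef := hpsd (N - k) (k + 1) (by omega)
    have hΛpd : (Λ k).PosDef :=
      (hΛ k hk) ▸ Matrix.PosDef.posSemidef_add (psd_conj hS1 (B k)) (hR k hk)
    have hdet : IsUnit (Λ k).det := (Matrix.isUnit_iff_isUnit_det _).1 hΛpd.isUnit
    have hG1 : Λ k * (Λ k)⁻¹ = 1 := Matrix.mul_nonsing_inv _ hdet
    have hG2 : (Λ k)⁻¹ * Λ k = 1 := Matrix.nonsing_inv_mul _ hdet
    have hGt : ((Λ k)⁻¹)ᵀ = (Λ k)⁻¹ := by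
      rw [Matrix.transpose_nonsing_inv, trsym hΛpd.isHermitian]
    rw [hx k hk, hL k hk]
    have := step (A k) (B k) (Q k) (S k) (S (k+1)) (R k) (Λ k) ((Λ k)⁻¹)
      (trsym hS1.isHermitian) (hΛ k hk) hG1 hG2 hGt (hS k hk) (x k) (w k) (a k)
    linarith [this]
  have main : ∑ k ∈ Finset.range (N + 1),
      (x k ⬝ᵥ (Q k) *ᵥ x k + a k ⬝ᵥ (R k) *ᵥ a k +
        (x (k+1) ⬝ᵥ (S (k+1)) *ᵥ x (k+1) - x k ⬝ᵥ (S k) *ᵥ x k))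
      = ∑ k ∈ Finset.range (N + 1),
        ((a k + (L k) *ᵥ x k) ⬝ᵥ (Λ k) *ᵥ (a k + (L k) *ᵥ x k)
        + (w k ⬝ᵥ (S (k+1)) *ᵥ w k +
          2 * (w k ⬝ᵥ (S (k+1)) *ᵥ ((A k) *ᵥ x k + (B k) *ᵥ a k)))) :=
    Finset.sum_congr rfl fun k hk => hstep k (Finset.mem_range_succ_iff.mp hk)
  have tsum : ∑ k ∈ Finset.range (N + 1),
      (x (k+1) ⬝ᵥ (S (k+1)) *ᵥ x (k+1) - x k ⬝ᵥ (S k) *ᵥ x k)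
      = x (N+1) ⬝ᵥ (S (N+1)) *ᵥ x (N+1) - x 0 ⬝ᵥ (S 0) *ᵥ x 0 :=
    Finset.sum_range_sub (fun k => x k ⬝ᵥ (S k) *ᵥ x k) (N + 1)
  rw [Finset.sum_add_distrib, Finset.sum_add_distrib, tsum] at main
  rw [Finset.sum_add_distrib] at main
  have hQsplit : ∑ k ∈ Finset.range (N + 2), x k ⬝ᵥ (Q k) *ᵥ x k
      = ∑ k ∈ Finset.range (N + 1), x k ⬝ᵥ (Q k) *ᵥ x k
        + x (N+1) ⬝ᵥ (S (N+1)) *ᵥ x (N+1) := by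
    rw [Finset.sum_range_succ, hSN]
  rw [hQsplit]
  linarith [main]
end
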